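/- Let W = Q wr_Δ P be the wreath product of an elementary abelian p-group Q by a permutation p-group P on Δ, with base group B. Then [B, P] equals V, the subgroup of B consisting of all functions g : Δ → Q such that for every P-orbit Δ_i of Δ, the product ∏_{δ ∈ Δ_i} g(δ) is trivial. -/

import Mathlib

/-- The action of `P` on the base group `Δ → Q` of the wreath product,
permuting coordinates: `(σ • f) δ = f (σ⁻¹ • δ)`. -/
def wreathMulAut (Q : Type*) (Δ : Type*) (P : Type*) [Group Q] [Group P] [MulAction P Δ] :
    P →* MulAut (Δ → Q) where
  toFun σ := MulEquiv.arrowCongr (MulAction.toPerm σ) (MulEquiv.refl Q)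
  map_one' := by
    ext f δ
    simp [MulEquiv.arrowCongr]
  map_mul' σ τ := by
    ext f δ
    simp [MulEquiv.arrowCongr, mul_smul]

/-- The wreath product `Q wr_Δ P`, with base group `Δ → Q` and top group `P`. -/
abbrev WreathProduct (Q Δ P : Type*) [Group Q] [Group P] [MulAction P Δ] :=
  SemidirectProduct (Δ → Q) P (wreathMulAut Q Δ P)

instance (Q Δ P : Type*) [Group Q] [Group P] [MulAction P Δ] [Finite Q] [Finite Δ]
    [Finite P] : Finite (WreathProduct Q Δ P) :=
  Finite.of_injective (fun w => (w.left, w.right)) fun a b h => by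
    cases a; cases b
    simpa [SemidirectProduct.ext_iff, Prod.ext_iff] using h

open scoped Classical

/-! For `f` in the base group and `σ ∈ P` we have `⁅f, σ⁆ = f (σ • f)⁻¹`, so `[B, P]` is the
subgroup of `B` generated by these elements. Reindexing by `σ` preserves every orbit product, so
they lie in `V`. Conversely, with `e_δ` the point masses and `r(δ)` a chosen representative of the
orbit of `δ`, each `e_δ(q) e_{r(δ)}(q)⁻¹` is such a generator, and for `g ∈ V` the product
`∏_δ e_{r(δ)}(g δ)` collapses orbitwise to `1`, whence `g = ∏_δ e_δ(g δ) e_{r(δ)}(g δ)⁻¹`. -/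

open scoped commutatorElement

namespace SemidirectProduct

variable {N G : Type*} [Group N] [Group G] {φ : G →* MulAut N}

theorem commutatorElement_inl_inr (n : N) (g : G) :
    ⁅(inl n : N ⋊[φ] G), (inr g : N ⋊[φ] G)⁆ = inl (n * (φ g n)⁻¹) := by
  ext <;> simp [commutatorElement_def]

theorem commutator_range_inl_range_inr :
    ⁅(inl : N →* N ⋊[φ] G).range, (inr : G →* N ⋊[φ] G).range⁆ =
      (Subgroup.closure {x | ∃ (n : N) (g : G), n * (φ g n)⁻¹ = x}).map inl := by
  rw [Subgroup.commutator_def, MonoidHom.map_closure]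
  congr 1
  ext x
  constructor
  · rintro ⟨_, ⟨n, rfl⟩, _, ⟨g, rfl⟩, rfl⟩
    exact ⟨_, ⟨n, g, rfl⟩, (commutatorElement_inl_inr n g).symm⟩
  · rintro ⟨_, ⟨n, g, rfl⟩, rfl⟩
    exact ⟨_, ⟨n, rfl⟩, _, ⟨g, rfl⟩, commutatorElement_inl_inr n g⟩

end SemidirectProduct

section WreathProduct

variable {Q Δ P : Type*} [Group P] [MulAction P Δ]

theorem wreathMulAut_apply [Group Q] (σ : P) (f : Δ → Q) (δ : Δ) :
    wreathMulAut Q Δ P σ f δ = f (σ⁻¹ • δ) := rfl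

theorem wreathMulAut_mulSingle [Group Q] (σ : P) (δ : Δ) (q : Q) :
    wreathMulAut Q Δ P σ (Pi.mulSingle δ q) = Pi.mulSingle (σ • δ) q := by
  funext d
  simp only [wreathMulAut_apply, Pi.mulSingle_apply, inv_smul_eq_iff]

theorem MulAction.smul_mem_orbit_iff (σ : P) {δ δ₀ : Δ} :
    σ • δ ∈ MulAction.orbit P δ₀ ↔ δ ∈ MulAction.orbit P δ₀ := by
  rw [← MulAction.orbit_eq_iff, MulAction.orbit_smul, MulAction.orbit_eq_iff]

variable [CommGroup Q] [Fintype Δ]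

theorem prod_orbit_comp_smul (f : Δ → Q) (σ : P) (δ₀ : Δ) :
    ∏ δ ∈ Finset.univ.filter (· ∈ MulAction.orbit P δ₀), f (σ • δ) =
      ∏ δ ∈ Finset.univ.filter (· ∈ MulAction.orbit P δ₀), f δ :=
  Finset.prod_equiv (MulAction.toPerm σ) (by simp [MulAction.smul_mem_orbit_iff]) (fun _ _ => rfl)

variable (Q P) in
def orbitProdOneSubgroup : Subgroup (Δ → Q) where
  carrier := {g | ∀ δ₀ : Δ, ∏ δ ∈ Finset.univ.filter (· ∈ MulAction.orbit P δ₀), g δ = 1}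
  one_mem' _ := by simp
  mul_mem' ha hb δ₀ := by simp only [Pi.mul_apply, Finset.prod_mul_distrib, ha δ₀, hb δ₀, one_mul]
  inv_mem' ha δ₀ := by simp only [Pi.inv_apply, Finset.prod_inv_distrib, ha δ₀, inv_one]

theorem closure_mul_inv_wreathMulAut_le :
    Subgroup.closure {x | ∃ (f : Δ → Q) (σ : P), f * (wreathMulAut Q Δ P σ f)⁻¹ = x} ≤
      orbitProdOneSubgroup Q P := by
  rw [Subgroup.closure_le]
  rintro _ ⟨f, σ, rfl⟩ δ₀
  simp only [Pi.mul_apply, Pi.inv_apply, wreathMulAut_apply, Finset.prod_mul_distrib,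
    Finset.prod_inv_distrib, prod_orbit_comp_smul, mul_inv_cancel]

theorem prod_mulSingle_orbit_out_eq_one {g : Δ → Q} (hg : g ∈ orbitProdOneSubgroup Q P) :
    ∏ δ, (Pi.mulSingle (Quotient.mk'' δ : MulAction.orbitRel.Quotient P Δ).out (g δ) : Δ → Q) =
      1 := by
  rw [← Finset.prod_fiberwise Finset.univ
    (Quotient.mk'' : Δ → MulAction.orbitRel.Quotient P Δ)]
  refine Finset.prod_eq_one fun ω _ => ?_
  have orbit_out : ∀ δ, Quotient.mk'' δ = ω ↔ δ ∈ MulAction.orbit P ω.out := fun δ => by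
    rw [← MulAction.orbitRel.Quotient.mem_orbit,
      MulAction.orbitRel.Quotient.orbit_eq_orbit_out ω Quotient.out_eq']
  calc ∏ δ with Quotient.mk'' δ = ω,
        (Pi.mulSingle (Quotient.mk'' δ : MulAction.orbitRel.Quotient P Δ).out (g δ) : Δ → Q)
      = ∏ δ with Quotient.mk'' δ = ω, (Pi.mulSingle ω.out (g δ) : Δ → Q) :=
        Finset.prod_congr rfl fun δ hδ => by rw [(Finset.mem_filter.mp hδ).2]
    _ = Pi.mulSingle ω.out (∏ δ with Quotient.mk'' δ = ω, g δ) :=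
        (map_prod (MonoidHom.mulSingle (fun _ : Δ => Q) ω.out) _ _).symm
    _ = 1 := by simp only [orbit_out, hg ω.out, Pi.mulSingle_one]

theorem orbitProdOneSubgroup_le_closure :
    orbitProdOneSubgroup Q P ≤
      Subgroup.closure {x | ∃ (f : Δ → Q) (σ : P), f * (wreathMulAut Q Δ P σ f)⁻¹ = x} := by
  intro g hg
  have mulSingle_mem (δ : Δ) (q : Q) (σ : P) :
      Pi.mulSingle δ q * (Pi.mulSingle (σ • δ) q)⁻¹ ∈ Subgroup.closure
        {x | ∃ (f : Δ → Q) (σ : P), f * (wreathMulAut Q Δ P σ f)⁻¹ = x} :=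
    Subgroup.subset_closure ⟨_, σ, by rw [wreathMulAut_mulSingle]⟩
  have decomp : g = ∏ δ, Pi.mulSingle δ (g δ) *
      (Pi.mulSingle (Quotient.mk'' δ : MulAction.orbitRel.Quotient P Δ).out (g δ))⁻¹ := by
    rw [Finset.prod_mul_distrib, Finset.prod_inv_distrib, prod_mulSingle_orbit_out_eq_one hg,
      inv_one, mul_one, Finset.univ_prod_mulSingle]
  rw [decomp]
  refine Subgroup.prod_mem _ fun δ _ => ?_
  obtain ⟨σ, hσ⟩ := (MulAction.orbitRel_apply (G := P)).mp (Quotient.mk_out' δ)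
  rw [← hσ]
  exact mulSingle_mem δ (g δ) σ

theorem closure_mul_inv_wreathMulAut_eq :
    Subgroup.closure {x | ∃ (f : Δ → Q) (σ : P), f * (wreathMulAut Q Δ P σ f)⁻¹ = x} =
      orbitProdOneSubgroup Q P :=
  closure_mul_inv_wreathMulAut_le.antisymm orbitProdOneSubgroup_le_closure

end WreathProduct

theorem commutator_base_top_eq_general (Q Δ P : Type*) [CommGroup Q]
    [Group P] [Fintype Δ] [MulAction P Δ] :
    ((⁅((SemidirectProduct.inl : (Δ → Q) →* WreathProduct Q Δ P).range),
        ((SemidirectProduct.inr : P →* WreathProduct Q Δ P).range)⁆ :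
      Subgroup (WreathProduct Q Δ P)) : Set (WreathProduct Q Δ P)) =
      (SemidirectProduct.inl : (Δ → Q) →* WreathProduct Q Δ P) ''
        {g : Δ → Q | ∀ δ₀ : Δ,
          ∏ δ ∈ Finset.univ.filter (fun d => d ∈ MulAction.orbit P δ₀), g δ = 1} := by
  rw [SemidirectProduct.commutator_range_inl_range_inr, closure_mul_inv_wreathMulAut_eq,
    Subgroup.coe_map]
  rfl

/-- In `W = Q wr_Δ P` with `Q` elementary abelian and `P` a permutation `p`-group on `Δ`,
the commutator `[B, P]` of the base group `B` with the top group equals the subgroup `V`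
of `B` of all functions whose product over each `P`-orbit is trivial. -/
theorem commutator_base_top_eq (p : ℕ) (hp : p.Prime) (Q Δ P : Type*) [CommGroup Q]
    [Group P] [Fintype Δ] [MulAction P Δ] [FaithfulSMul P Δ]
    (hQ : ∀ x : Q, x ^ p = 1) (hP : IsPGroup p P) :
    ((⁅((SemidirectProduct.inl : (Δ → Q) →* WreathProduct Q Δ P).range),
        ((SemidirectProduct.inr : P →* WreathProduct Q Δ P).range)⁆ :
      Subgroup (WreathProduct Q Δ P)) : Set (WreathProduct Q Δ P)) =
      (SemidirectProduct.inl : (Δ → Q) →* WreathProduct Q Δ P) ''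
        {g : Δ → Q | ∀ δ₀ : Δ,
          ∏ δ ∈ Finset.univ.filter (fun d => d ∈ MulAction.orbit P δ₀), g δ = 1} :=
  commutator_base_top_eq_general Q Δ P
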